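/- arXiv:2301.09098 — 5 statements merged into one kernel-verified Lean document; each statement's English description precedes it below -/
import Mathlib

section
/- Let A be an n×n symmetric positive definite matrix with condition number κ_A = λₙ/λ₁. For every x in the unit simplex Ω, the spectral radius of the Hessian ∇²φ_A(x) = 4(Ax)(Ax)ᵀ/(xᵀAx)² − 2A/(xᵀAx) of φ_A(x) = −ln(xᵀAx) is strictly less than 4n κ_A². -/
/-! If `y` is a unit eigenvector of the Hessian with eigenvalue `μ`, and `q = xᵀAx`, then
`μ = 4 (Ax ⬝ y)² / q² - 2 yᵀAy / q`. Cauchy–Schwarz for the inner product defined by `A` gives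
`(Ax ⬝ y)² ≤ q yᵀAy`, so the nonnegative first term is at most twice the second, and
`|μ| ≤ 2 yᵀAy / q ≤ 2 λₙ / q`. On the simplex `q ≥ λ₁ ‖x‖² ≥ λ₁ / n`, hence `|μ| ≤ 2 n κ < 4 n κ²`. -/

open Matrix

/-- The Hessian of `φ_A(x) = -ln(xᵀAx)`. -/
noncomputable def hessPhi {n : ℕ} (A : Matrix (Fin n) (Fin n) ℝ) (x : Fin n → ℝ) :
    Matrix (Fin n) (Fin n) ℝ :=
  (4 / (x ⬝ᵥ A.mulVec x) ^ 2) • Matrix.vecMulVec (A.mulVec x) (A.mulVec x)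
    - (2 / (x ⬝ᵥ A.mulVec x)) • A

namespace Matrix

variable {ι : Type*} [Fintype ι] {A : Matrix ι ι ℝ}

theorem IsHermitian.dotProduct_mulVec_comm (hA : A.IsHermitian) (u w : ι → ℝ) :
    u ⬝ᵥ A *ᵥ w = w ⬝ᵥ A *ᵥ u := by
  rw [dotProduct_mulVec, ← mulVec_transpose, ← conjTranspose_eq_transpose_of_trivial, hA.eq,
    dotProduct_comm]

theorem PosSemidef.sq_dotProduct_mulVec_le (hA : A.PosSemidef) (x y : ι → ℝ) :
    (x ⬝ᵥ A *ᵥ y) ^ 2 ≤ (x ⬝ᵥ A *ᵥ x) * (y ⬝ᵥ A *ᵥ y) := by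
  have hquad : ∀ t : ℝ, 0 ≤ (y ⬝ᵥ A *ᵥ y) * (t * t) + 2 * (x ⬝ᵥ A *ᵥ y) * t + x ⬝ᵥ A *ᵥ x := by
    intro t
    have h := hA.dotProduct_mulVec_nonneg (x + t • y)
    simp only [star_trivial, mulVec_add, mulVec_smul, add_dotProduct, dotProduct_add,
      smul_dotProduct, dotProduct_smul, smul_eq_mul] at h
    rw [hA.isHermitian.dotProduct_mulVec_comm y x] at h
    linarith
  have := discrim_le_zero hquad
  rw [discrim] at this
  linarith

variable [DecidableEq ι]

open scoped MatrixOrder in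
theorem IsHermitian.dotProduct_mulVec_le_of_eigenvalues_le (hA : A.IsHermitian) {b : ℝ}
    (hb : ∀ i, hA.eigenvalues i ≤ b) (y : ι → ℝ) : y ⬝ᵥ A *ᵥ y ≤ b * (y ⬝ᵥ y) := by
  have hle : A ≤ algebraMap ℝ _ b := le_algebraMap_of_spectrum_le
    (by rw [hA.spectrum_real_eq_range_eigenvalues]; rintro _ ⟨i, rfl⟩; exact hb i)
    hA.isSelfAdjoint
  have := (Matrix.le_iff.mp hle).dotProduct_mulVec_nonneg y
  simpa [sub_mulVec, Algebra.algebraMap_eq_smul_one, smul_mulVec, dotProduct_sub] using this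

open scoped MatrixOrder in
theorem IsHermitian.eigenvalues_le_dotProduct_mulVec (hA : A.IsHermitian) {a : ℝ}
    (ha : ∀ i, a ≤ hA.eigenvalues i) (y : ι → ℝ) : a * (y ⬝ᵥ y) ≤ y ⬝ᵥ A *ᵥ y := by
  have hle : algebraMap ℝ _ a ≤ A := algebraMap_le_of_le_spectrum
    (by rw [hA.spectrum_real_eq_range_eigenvalues]; rintro _ ⟨i, rfl⟩; exact ha i)
    hA.isSelfAdjoint
  have := (Matrix.le_iff.mp hle).dotProduct_mulVec_nonneg y
  simpa [sub_mulVec, Algebra.algebraMap_eq_smul_one, smul_mulVec, dotProduct_sub] using this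

theorem IsHermitian.abs_eigenvalues_le_of_abs_dotProduct_mulVec_le (hA : A.IsHermitian) {c : ℝ}
    (hc : ∀ y, |y ⬝ᵥ A *ᵥ y| ≤ c * (y ⬝ᵥ y)) (i : ι) : |hA.eigenvalues i| ≤ c := by
  have hunit : ⇑(hA.eigenvectorBasis i) ⬝ᵥ ⇑(hA.eigenvectorBasis i) = 1 := by
    have h := real_inner_self_eq_norm_sq (hA.eigenvectorBasis i)
    rw [hA.eigenvectorBasis.orthonormal.1 i, EuclideanSpace.inner_eq_star_dotProduct] at h
    simpa [dotProduct_comm] using h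
  simpa [hA.eigenvalues_eq i, hunit] using hc (hA.eigenvectorBasis i)

end Matrix

theorem one_le_card_mul_dotProduct_self_of_mem_stdSimplex {ι : Type*} [Fintype ι] {x : ι → ℝ}
    (hx : x ∈ stdSimplex ℝ ι) : 1 ≤ Fintype.card ι * (x ⬝ᵥ x) := by
  have h := sq_sum_le_card_mul_sum_sq (s := Finset.univ) (f := x)
  rw [hx.2] at h
  simpa [dotProduct, sq] using h

theorem dotProduct_hessPhi_mulVec {n : ℕ} (A : Matrix (Fin n) (Fin n) ℝ) (x y : Fin n → ℝ) :
    y ⬝ᵥ hessPhi A x *ᵥ y =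
      4 / (x ⬝ᵥ A *ᵥ x) ^ 2 * (A *ᵥ x ⬝ᵥ y) ^ 2 - 2 / (x ⬝ᵥ A *ᵥ x) * (y ⬝ᵥ A *ᵥ y) := by
  simp only [hessPhi, sub_mulVec, smul_mulVec, dotProduct_sub, dotProduct_smul, smul_eq_mul,
    vecMulVec_mulVec, op_smul_eq_smul, dotProduct_comm y (A *ᵥ x)]
  ring

theorem abs_dotProduct_hessPhi_mulVec_le {n : ℕ} {A : Matrix (Fin n) (Fin n) ℝ}
    (hA : A.PosSemidef) {x : Fin n → ℝ} (hx : 0 < x ⬝ᵥ A *ᵥ x) (y : Fin n → ℝ) :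
    |y ⬝ᵥ hessPhi A x *ᵥ y| ≤ 2 / (x ⬝ᵥ A *ᵥ x) * (y ⬝ᵥ A *ᵥ y) := by
  rw [dotProduct_hessPhi_mulVec, abs_sub_le_iff]
  set q := x ⬝ᵥ A *ᵥ x
  have hcs : (A *ᵥ x ⬝ᵥ y) ^ 2 ≤ q * (y ⬝ᵥ A *ᵥ y) := by
    rw [dotProduct_comm, hA.isHermitian.dotProduct_mulVec_comm]
    exact hA.sq_dotProduct_mulVec_le x y
  have hs : 4 / q ^ 2 * (A *ᵥ x ⬝ᵥ y) ^ 2 ≤ 2 * (2 / q * (y ⬝ᵥ A *ᵥ y)) :=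
    calc 4 / q ^ 2 * (A *ᵥ x ⬝ᵥ y) ^ 2 ≤ 4 / q ^ 2 * (q * (y ⬝ᵥ A *ᵥ y)) := by gcongr
      _ = 2 * (2 / q * (y ⬝ᵥ A *ᵥ y)) := by field_simp; ring
  have hs₀ : 0 ≤ 4 / q ^ 2 * (A *ᵥ x ⬝ᵥ y) ^ 2 := by positivity
  constructor <;> linarith

theorem hessPhi_spectral_radius_lt_general (n : ℕ) (A : Matrix (Fin n) (Fin n) ℝ)
    (hA : A.PosDef) (l1 ln κ : ℝ)
    (hmin : ∀ i, l1 ≤ hA.isHermitian.eigenvalues i)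
    (hminmem : ∃ i, hA.isHermitian.eigenvalues i = l1)
    (hmax : ∀ i, hA.isHermitian.eigenvalues i ≤ ln)
    (hκ : κ = ln / l1) :
    ∀ x ∈ stdSimplex ℝ (Fin n), ∀ (hH : (hessPhi A x).IsHermitian),
      ∀ i, |hH.eigenvalues i| < 4 * n * κ ^ 2 := by
  intro x hx hH i
  obtain ⟨j, hj⟩ := hminmem
  have hn : (0 : ℝ) < n := by exact_mod_cast i.pos
  have hl1 : 0 < l1 := hj ▸ hA.eigenvalues_pos j
  have hκ1 : 1 ≤ κ := hκ ▸ (one_le_div hl1).mpr (hj ▸ hmax j)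
  have hln : ln = κ * l1 := by rw [hκ, div_mul_cancel₀ _ hl1.ne']
  set q := x ⬝ᵥ A *ᵥ x
  have hq : l1 ≤ n * q := by
    have hx₁ := one_le_card_mul_dotProduct_self_of_mem_stdSimplex hx
    have hx₂ := hA.isHermitian.eigenvalues_le_dotProduct_mulVec hmin x
    rw [Fintype.card_fin] at hx₁
    nlinarith
  have hq₀ : 0 < q := pos_of_mul_pos_right (hl1.trans_le hq) hn.le
  have hμ : |hH.eigenvalues i| ≤ 2 * ln / q := by
    refine hH.abs_eigenvalues_le_of_abs_dotProduct_mulVec_le (fun y => ?_) i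
    calc |y ⬝ᵥ hessPhi A x *ᵥ y| ≤ 2 / q * (y ⬝ᵥ A *ᵥ y) :=
          abs_dotProduct_hessPhi_mulVec_le hA.posSemidef hq₀ y
      _ ≤ 2 / q * (ln * (y ⬝ᵥ y)) := by
          gcongr; exact hA.isHermitian.dotProduct_mulVec_le_of_eigenvalues_le hmax y
      _ = 2 * ln / q * (y ⬝ᵥ y) := by ring
  calc |hH.eigenvalues i| ≤ 2 * ln / q := hμ
    _ ≤ 2 * n * κ := by
        rw [div_le_iff₀ hq₀, hln]; nlinarith
    _ < 4 * n * κ ^ 2 := by nlinarith [mul_pos hn (by linarith : (0 : ℝ) < κ)]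

theorem hessPhi_spectral_radius_lt (n : ℕ) (A : Matrix (Fin n) (Fin n) ℝ)
    (hA : A.PosDef) (l1 ln κ : ℝ)
    (hmin : ∀ i, l1 ≤ hA.isHermitian.eigenvalues i)
    (hminmem : ∃ i, hA.isHermitian.eigenvalues i = l1)
    (hmax : ∀ i, hA.isHermitian.eigenvalues i ≤ ln)
    (hmaxmem : ∃ i, hA.isHermitian.eigenvalues i = ln)
    (hκ : κ = ln / l1) :
    ∀ x ∈ stdSimplex ℝ (Fin n), ∀ (hH : (hessPhi A x).IsHermitian),
      ∀ i, |hH.eigenvalues i| < 4 * n * κ ^ 2 :=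
  hessPhi_spectral_radius_lt_general n A hA l1 ln κ hmin hminmem hmax hκ
end

section
/- Suppose A ∈ SPD and −C ∈ SPD. Let D = [[A, 0], [0, −C]] and G = [[−B, −C], [−C, 0]] in ℝ^{2n×2n}. If ((y,x), λ) with v, w ≥ 0 solves SEiCP(G,D), i.e., λD(y;x) − G(y;x) = (w;v), eᵀ(y;x) = 1, yᵀw + xᵀv = 0, (x,y,v,w,λ) ≥ 0, then v = 0, y = λx, and λ > 0. -/
/-!
Read blockwise, the equation is `(λA + B) y + C x = w` and `C (y - λx) = v`. Complementarity of
nonnegative vectors forces `yᵀw = xᵀv = 0`, so `z = y - λx` satisfies `zᵀCz = zᵀv = yᵀv ≥ 0`;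
negative definiteness of `C` gives `z = 0`, hence `y = λx` and `v = 0`. If `λ = 0`, then `y = 0`
and `xᵀCx = xᵀw ≥ 0` forces `x = 0`, contradicting `eᵀ(y;x) = 1`.
-/

open Matrix

namespace Matrix

section Blocks

variable {ι R : Type*} [CommRing R]

theorem smul_fromBlocks_sub_fromBlocks (l : R) (A B C : Matrix ι ι R) :
    l • fromBlocks A 0 0 (-C) - fromBlocks (-B) (-C) (-C) 0 =
      fromBlocks (l • A + B) C C (-(l • C)) := by
  rw [sub_eq_add_neg, fromBlocks_smul, fromBlocks_neg, fromBlocks_add]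
  congr 1 <;> simp

variable [Fintype ι]

theorem smul_fromBlocks_mulVec_sub_fromBlocks_mulVec_eq_iff (l : R) (A B C : Matrix ι ι R)
    (x y v w : ι → R) :
    l • fromBlocks A 0 0 (-C) *ᵥ Sum.elim y x - fromBlocks (-B) (-C) (-C) 0 *ᵥ Sum.elim y x =
        Sum.elim w v ↔
      (l • A + B) *ᵥ y + C *ᵥ x = w ∧ C *ᵥ (y - l • x) = v := by
  rw [← smul_mulVec, ← sub_mulVec, smul_fromBlocks_sub_fromBlocks, fromBlocks_mulVec,
    Sum.elim_comp_inl, Sum.elim_comp_inr, Sum.elim_eq_iff, mulVec_sub, mulVec_smul,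
    neg_mulVec, smul_mulVec, ← sub_eq_add_neg]

end Blocks

section NegDef

variable {ι R : Type*} [Fintype ι] [CommRing R] [PartialOrder R] [IsOrderedRing R] [StarRing R]
  [TrivialStar R] {C : Matrix ι ι R}

theorem eq_zero_of_dotProduct_mulVec_nonneg_of_neg_posDef (hC : (-C).PosDef) {z : ι → R}
    (hz : 0 ≤ z ⬝ᵥ C *ᵥ z) : z = 0 := by
  by_contra hne
  have hpos := hC.dotProduct_mulVec_pos hne
  rw [star_trivial, neg_mulVec, dotProduct_neg] at hpos
  exact (neg_pos.1 hpos).not_ge hz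

theorem eq_zero_of_mulVec_nonneg_of_neg_posDef (hC : (-C).PosDef) {x : ι → R} (hx : 0 ≤ x)
    (hCx : 0 ≤ C *ᵥ x) : x = 0 :=
  eq_zero_of_dotProduct_mulVec_nonneg_of_neg_posDef hC (dotProduct_nonneg_of_nonneg hx hCx)

end NegDef

end Matrix

theorem seicp_GD_structure_general (n : ℕ) (A B C : Matrix (Fin n) (Fin n) ℝ)
    (hC : (-C).PosDef)
    (x y v w : Fin n → ℝ) (l : ℝ)
    (D : Matrix (Fin n ⊕ Fin n) (Fin n ⊕ Fin n) ℝ)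
    (hD : D = Matrix.fromBlocks A 0 0 (-C))
    (G : Matrix (Fin n ⊕ Fin n) (Fin n ⊕ Fin n) ℝ)
    (hG : G = Matrix.fromBlocks (-B) (-C) (-C) 0)
    (heq : l • D.mulVec (Sum.elim y x) - G.mulVec (Sum.elim y x) = Sum.elim w v)
    (hsum : (∑ i, y i) + (∑ i, x i) = 1)
    (hcomp : y ⬝ᵥ w + x ⬝ᵥ v = 0)
    (hx : ∀ i, 0 ≤ x i) (hy : ∀ i, 0 ≤ y i)
    (hv : ∀ i, 0 ≤ v i) (hw : ∀ i, 0 ≤ w i) (hl : 0 ≤ l) :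
    v = 0 ∧ y = l • x ∧ 0 < l := by
  subst hD hG
  obtain ⟨htop, hbot⟩ := (smul_fromBlocks_mulVec_sub_fromBlocks_mulVec_eq_iff l A B C x y v w).1 heq
  obtain ⟨-, hxv⟩ := (add_eq_zero_iff_of_nonneg (dotProduct_nonneg_of_nonneg hy hw)
    (dotProduct_nonneg_of_nonneg hx hv)).1 hcomp
  have hz : y - l • x = 0 := by
    refine eq_zero_of_dotProduct_mulVec_nonneg_of_neg_posDef hC ?_
    rw [hbot, sub_dotProduct, smul_dotProduct, hxv, smul_zero, sub_zero]
    exact dotProduct_nonneg_of_nonneg hy hv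
  have hyx : y = l • x := sub_eq_zero.1 hz
  refine ⟨by rw [← hbot, hz, mulVec_zero], hyx, hl.lt_of_ne ?_⟩
  rintro rfl
  rw [hyx, zero_smul, zero_smul, zero_add, mulVec_zero, zero_add] at htop
  have hx0 : x = 0 := eq_zero_of_mulVec_nonneg_of_neg_posDef hC hx (htop ▸ hw)
  simp [hyx, hx0] at hsum

theorem seicp_GD_structure (n : ℕ) (A B C : Matrix (Fin n) (Fin n) ℝ)
    (hA : A.PosDef) (hC : (-C).PosDef) (hB : B.IsSymm)
    (x y v w : Fin n → ℝ) (l : ℝ)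
    (D : Matrix (Fin n ⊕ Fin n) (Fin n ⊕ Fin n) ℝ)
    (hD : D = Matrix.fromBlocks A 0 0 (-C))
    (G : Matrix (Fin n ⊕ Fin n) (Fin n ⊕ Fin n) ℝ)
    (hG : G = Matrix.fromBlocks (-B) (-C) (-C) 0)
    (heq : l • D.mulVec (Sum.elim y x) - G.mulVec (Sum.elim y x) = Sum.elim w v)
    (hsum : (∑ i, y i) + (∑ i, x i) = 1)
    (hcomp : y ⬝ᵥ w + x ⬝ᵥ v = 0)
    (hx : ∀ i, 0 ≤ x i) (hy : ∀ i, 0 ≤ y i)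
    (hv : ∀ i, 0 ≤ v i) (hw : ∀ i, 0 ≤ w i) (hl : 0 ≤ l) :
    v = 0 ∧ y = l • x ∧ 0 < l :=
  seicp_GD_structure_general n A B C hC x y v w l D hD G hG heq hsum hcomp hx hy hv hw hl
end

section
/- Suppose A ∈ SPD and −C ∈ SPD, and let D, G be as in the two-block formulation. If ((y,x), λ) solves SEiCP(G,D) (so that v = 0, y = λx, λ > 0), then ((1+λ)x, λ) solves the symmetric quadratic eigenvalue complementarity problem: writing x̄ = (1+λ)x and w̄ = λ²Ax̄ + λBx̄ + Cx̄, one has x̄ ≥ 0, w̄ ≥ 0, x̄ᵀw̄ = 0, and eᵀx̄ = 1. -/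
/-! The second block row of the SEiCP says `v = C (y - λx)`. Complementarity gives `xᵀv = 0`,
so `(y - λx)ᵀ C (y - λx) = yᵀv ≥ 0`, and negative definiteness of `C` forces `y = λx`.
The first block row then reads `w = λ²Ax + λBx + Cx`, so that `w̄ = (1 + λ)w`, and everything
else is rescaling by `1 + λ > 0`. -/

open Matrix

section

variable {m R : Type*} [Fintype m]

theorem fromBlocks_pencil_mulVec [CommRing R] (A B C : Matrix m m R) (x y : m → R) (l : R) :
    l • fromBlocks A 0 0 (-C) *ᵥ Sum.elim y x - fromBlocks (-B) (-C) (-C) 0 *ᵥ Sum.elim y x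
      = Sum.elim (l • A *ᵥ y + B *ᵥ y + C *ᵥ x) (C *ᵥ (y - l • x)) := by
  ext (i | i) <;> simp [fromBlocks_mulVec, neg_mulVec, mulVec_sub, mulVec_smul] <;> ring

theorem dotProduct_mulVec_nonpos_of_neg_posDef {C : Matrix m m ℝ} (hC : (-C).PosDef)
    (x : m → ℝ) : x ⬝ᵥ C *ᵥ x ≤ 0 := by
  have := hC.posSemidef.dotProduct_mulVec_nonneg x
  simp only [star_trivial, neg_mulVec, dotProduct_neg] at this
  linarith

theorem eq_zero_of_neg_posDef_of_nonneg {C : Matrix m m ℝ} (hC : (-C).PosDef) {z : m → ℝ}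
    (hz : 0 ≤ z ⬝ᵥ C *ᵥ z) : z = 0 := by
  by_contra hne
  have := hC.dotProduct_mulVec_pos hne
  simp only [star_trivial, neg_mulVec, dotProduct_neg] at this
  linarith

theorem eq_smul_of_neg_posDef_of_complementarity {C : Matrix m m ℝ} (hC : (-C).PosDef)
    {x y v : m → ℝ} {l : ℝ} (hy : 0 ≤ y) (hv : 0 ≤ v) (hxv : x ⬝ᵥ v = 0)
    (hvC : v = C *ᵥ (y - l • x)) : y = l • x := by
  rw [← sub_eq_zero]
  apply eq_zero_of_neg_posDef_of_nonneg hC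
  calc 0 ≤ y ⬝ᵥ v := dotProduct_nonneg_of_nonneg hy hv
    _ = (y - l • x) ⬝ᵥ v := by rw [sub_dotProduct, smul_dotProduct, hxv, smul_zero, sub_zero]
    _ = _ := by rw [hvC]

end

theorem seicp_GD_to_sqeicp_general (n : ℕ) (A B C : Matrix (Fin n) (Fin n) ℝ)
    (hC : (-C).PosDef)
    (x y v w : Fin n → ℝ) (l : ℝ)
    (D : Matrix (Fin n ⊕ Fin n) (Fin n ⊕ Fin n) ℝ)
    (hD : D = Matrix.fromBlocks A 0 0 (-C))
    (G : Matrix (Fin n ⊕ Fin n) (Fin n ⊕ Fin n) ℝ)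
    (hG : G = Matrix.fromBlocks (-B) (-C) (-C) 0)
    (heq : l • D.mulVec (Sum.elim y x) - G.mulVec (Sum.elim y x) = Sum.elim w v)
    (hsum : (∑ i, y i) + (∑ i, x i) = 1)
    (hcomp : y ⬝ᵥ w + x ⬝ᵥ v = 0)
    (hx : ∀ i, 0 ≤ x i) (hy : ∀ i, 0 ≤ y i)
    (hv : ∀ i, 0 ≤ v i) (hw : ∀ i, 0 ≤ w i) (hl : 0 ≤ l)
    (xbar wbar : Fin n → ℝ)
    (hxbar : xbar = (1 + l) • x)
    (hwbar : wbar = l ^ 2 • A.mulVec xbar + l • B.mulVec xbar + C.mulVec xbar) :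
    (∀ i, 0 ≤ xbar i) ∧ (∀ i, 0 ≤ wbar i) ∧ xbar ⬝ᵥ wbar = 0 ∧ ∑ i, xbar i = 1 := by
  subst hD hG hxbar hwbar
  obtain ⟨hwy, hvC⟩ := Sum.elim_eq_iff.mp (fromBlocks_pencil_mulVec A B C x y l ▸ heq).symm
  have hyw_nonneg := dotProduct_nonneg_of_nonneg (v := y) hy hw
  have hxv_nonneg := dotProduct_nonneg_of_nonneg (v := x) hx hv
  have hyw : y ⬝ᵥ w = 0 := by linarith
  have hxv : x ⬝ᵥ v = 0 := by linarith
  obtain rfl := eq_smul_of_neg_posDef_of_complementarity hC hy hv hxv hvC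
  have hxw : x ⬝ᵥ w = 0 := by
    rcases hl.eq_or_lt with rfl | hl_pos
    · simp only [zero_smul, mulVec_zero, zero_add] at hwy
      exact le_antisymm (hwy ▸ dotProduct_mulVec_nonpos_of_neg_posDef hC x)
        (dotProduct_nonneg_of_nonneg hx hw)
    · rw [smul_dotProduct, smul_eq_mul] at hyw
      exact (mul_eq_zero.mp hyw).resolve_left hl_pos.ne'
  have hwbar : l ^ 2 • A *ᵥ ((1 + l) • x) + l • B *ᵥ ((1 + l) • x) + C *ᵥ ((1 + l) • x)
      = (1 + l) • w := by
    rw [hwy]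
    simp only [mulVec_smul]
    module
  have h1l : 0 ≤ 1 + l := by linarith
  refine ⟨(smul_nonneg h1l hx : 0 ≤ (1 + l) • x), ?_, ?_, ?_⟩
  · rw [hwbar]
    exact (smul_nonneg h1l hw : 0 ≤ (1 + l) • w)
  · rw [hwbar, smul_dotProduct, dotProduct_smul, hxw, smul_zero, smul_zero]
  · simp only [Pi.smul_apply, smul_eq_mul, ← Finset.mul_sum] at hsum ⊢
    linarith

theorem seicp_GD_to_sqeicp (n : ℕ) (A B C : Matrix (Fin n) (Fin n) ℝ)
    (hA : A.PosDef) (hC : (-C).PosDef) (hB : B.IsSymm)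
    (x y v w : Fin n → ℝ) (l : ℝ)
    (D : Matrix (Fin n ⊕ Fin n) (Fin n ⊕ Fin n) ℝ)
    (hD : D = Matrix.fromBlocks A 0 0 (-C))
    (G : Matrix (Fin n ⊕ Fin n) (Fin n ⊕ Fin n) ℝ)
    (hG : G = Matrix.fromBlocks (-B) (-C) (-C) 0)
    (heq : l • D.mulVec (Sum.elim y x) - G.mulVec (Sum.elim y x) = Sum.elim w v)
    (hsum : (∑ i, y i) + (∑ i, x i) = 1)
    (hcomp : y ⬝ᵥ w + x ⬝ᵥ v = 0)
    (hx : ∀ i, 0 ≤ x i) (hy : ∀ i, 0 ≤ y i)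
    (hv : ∀ i, 0 ≤ v i) (hw : ∀ i, 0 ≤ w i) (hl : 0 ≤ l)
    (xbar wbar : Fin n → ℝ)
    (hxbar : xbar = (1 + l) • x)
    (hwbar : wbar = l ^ 2 • A.mulVec xbar + l • B.mulVec xbar + C.mulVec xbar) :
    (∀ i, 0 ≤ xbar i) ∧ (∀ i, 0 ≤ wbar i) ∧ xbar ⬝ᵥ wbar = 0 ∧ ∑ i, xbar i = 1 :=
  seicp_GD_to_sqeicp_general n A B C hC x y v w l D hD G hG heq hsum hcomp hx hy hv hw hl xbar wbar
    hxbar hwbar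
end

section
/- Suppose A ∈ SPD and −C ∈ SPD, and (x, λ) solves SQEiCP with λ > 0. Then (z, λ) solves SEiCP(G,D) where z = (1+λ)⁻¹(λx, x), D = [[A,0],[0,−C]], G = [[−B,−C],[−C,0]]: namely λDz − Gz = (w; 0) for w = (1+λ)⁻¹(λ²Ax + λBx + Cx) ≥ 0, eᵀz = 1, zᵀ(w;0) = 0, and z ≥ 0. -/
open Matrix

theorem sqeicp_to_seicp_GD (n : ℕ) (A B C : Matrix (Fin n) (Fin n) ℝ)
    (hA : A.PosDef) (hC : (-C).PosDef) (hB : B.IsSymm)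
    (x : Fin n → ℝ) (l : ℝ) (hl : 0 < l)
    (hx : ∀ i, 0 ≤ x i) (hsum : ∑ i, x i = 1)
    (hwpos : ∀ i, 0 ≤ (l ^ 2 • A.mulVec x + l • B.mulVec x + C.mulVec x) i)
    (hcomp : x ⬝ᵥ (l ^ 2 • A.mulVec x + l • B.mulVec x + C.mulVec x) = 0)
    (D : Matrix (Fin n ⊕ Fin n) (Fin n ⊕ Fin n) ℝ)
    (hD : D = Matrix.fromBlocks A 0 0 (-C))
    (G : Matrix (Fin n ⊕ Fin n) (Fin n ⊕ Fin n) ℝ)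
    (hG : G = Matrix.fromBlocks (-B) (-C) (-C) 0)
    (z : Fin n ⊕ Fin n → ℝ)
    (hz : z = Sum.elim ((1 + l)⁻¹ • l • x) ((1 + l)⁻¹ • x))
    (w : Fin n → ℝ)
    (hw : w = (1 + l)⁻¹ • (l ^ 2 • A.mulVec x + l • B.mulVec x + C.mulVec x)) :
    l • D.mulVec z - G.mulVec z = Sum.elim w 0 ∧
    (∀ i, 0 ≤ w i) ∧
    (∑ i, z i) = 1 ∧
    z ⬝ᵥ Sum.elim w 0 = 0 ∧
    (∀ i, 0 ≤ z i) := by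
  have hl1 : (0:ℝ) < 1 + l := by linarith
  have hinv : (0:ℝ) ≤ (1 + l)⁻¹ := le_of_lt (inv_pos.mpr hl1)
  subst hD hG hz hw
  refine ⟨?_, ?_, ?_, ?_, ?_⟩
  · funext i
    cases i with
    | inl i =>
      simp [Matrix.fromBlocks_mulVec, mulVec_smul, Matrix.neg_mulVec, mulVec_add, smul_smul]
      ring
    | inr i =>
      simp [Matrix.fromBlocks_mulVec, mulVec_smul, Matrix.neg_mulVec, smul_smul]
      ring
  · intro i
    simpa using mul_nonneg hinv (hwpos i)
  · simp only [Fintype.sum_sum_type, Sum.elim_inl, Sum.elim_inr, Pi.smul_apply, smul_eq_mul]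
    have h2 : ∀ i, (1 + l)⁻¹ * (l * x i) + (1 + l)⁻¹ * x i = ((1 + l)⁻¹ * (1 + l)) * x i := by
      intro i; ring
    rw [← Finset.sum_add_distrib]
    simp_rw [h2]
    rw [← Finset.mul_sum, hsum, inv_mul_cancel₀ hl1.ne', mul_one]
  · simp only [dotProduct, Fintype.sum_sum_type, Sum.elim_inl, Sum.elim_inr, Pi.zero_apply,
      mul_zero, Finset.sum_const_zero, add_zero, Pi.smul_apply, smul_eq_mul]
    have : ∀ i, (1 + l)⁻¹ * (l * x i) * ((1 + l)⁻¹ *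
        (l ^ 2 • A.mulVec x + l • B.mulVec x + C.mulVec x) i)
        = ((1 + l)⁻¹ * l * (1 + l)⁻¹) * (x i * (l ^ 2 • A.mulVec x + l • B.mulVec x + C.mulVec x) i) := by
      intro i; ring
    simp_rw [this, ← Finset.mul_sum]
    simp only [dotProduct] at hcomp
    rw [hcomp, mul_zero]
  · intro i
    cases i with
    | inl i => simpa using mul_nonneg hinv (mul_nonneg hl.le (hx i))
    | inr i => simpa using mul_nonneg hinv (hx i)
end

section
/- Let v ∈ ℝⁿ and suppose λ* ∈ ℝ satisfies eᵀ[v − λ*e]₊ = 1, where [u]₊ denotes the componentwise positive part. Then the point p = [v − λ*e]₊ is the Euclidean projection of v onto the unit simplex Ω = {x : eᵀx = 1, x ≥ 0}; i.e., p ∈ Ω and ‖v − p‖₂ ≤ ‖v − x‖₂ for all x ∈ Ω. -/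
theorem simplex_projection_formula (n : ℕ) (v : Fin n → ℝ) (lam : ℝ)
    (p : Fin n → ℝ) (hp : p = fun i => max (v i - lam) 0)
    (hsum : ∑ i, p i = 1) :
    p ∈ stdSimplex ℝ (Fin n) ∧
    ∀ x ∈ stdSimplex ℝ (Fin n),
      Real.sqrt (∑ i, (v i - p i) ^ 2) ≤ Real.sqrt (∑ i, (v i - x i) ^ 2) := by
  have hpnn : ∀ i, 0 ≤ p i := by intro i; rw [hp]; exact le_max_right _ _
  constructor
  · exact ⟨hpnn, hsum⟩
  · intro x hx
    apply Real.sqrt_le_sqrt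
    have key : ∑ i, (v i - p i) * (x i - p i) ≤ 0 := by
      have h1 : ∀ i ∈ Finset.univ, (v i - p i) * (x i - p i) ≤ lam * (x i - p i) := by
        intro i _
        have hpi : p i = max (v i - lam) 0 := by rw [hp]
        by_cases h : v i - lam ≤ 0
        · have hp0 : p i = 0 := by rw [hpi]; exact max_eq_right h
          rw [hp0]
          have := hx.1 i
          nlinarith
        · have hpe : p i = v i - lam := by rw [hpi]; exact max_eq_left (by linarith)
          rw [hpe]; nlinarith [sq_nonneg (0:ℝ)]
      calc ∑ i, (v i - p i) * (x i - p i) ≤ ∑ i, lam * (x i - p i) :=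
            Finset.sum_le_sum h1
        _ = lam * ((∑ i, x i) - ∑ i, p i) := by
            rw [← Finset.sum_sub_distrib, Finset.mul_sum]
        _ = 0 := by rw [hx.2, hsum]; ring
    have expand : ∑ i, (v i - x i) ^ 2 =
        (∑ i, (v i - p i) ^ 2) - 2 * (∑ i, (v i - p i) * (x i - p i))
          + ∑ i, (x i - p i) ^ 2 := by
      rw [Finset.mul_sum, ← Finset.sum_sub_distrib, ← Finset.sum_add_distrib]
      exact Finset.sum_congr rfl fun i _ => by ring
    have hnn : 0 ≤ ∑ i, (x i - p i) ^ 2 :=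
      Finset.sum_nonneg fun i _ => sq_nonneg _
    linarith
end
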